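/- arXiv:2104.11519 — 6 statements merged into one kernel-verified Lean document; each statement's English description precedes it below -/
import Mathlib

section
/- Let X be a Banach space, Q : X** → X** a bounded linear projection with range κ_X(X) (the canonical image of X) such that ‖f‖ > ‖f - Q f‖ for every f ∈ X** not in ker Q. If a group G acts on X by (affine) isometries with linear parts π(g), then the dual-dual extensions π(g) : X** → X** map ker Q into ker Q. -/
open NormedSpace

/-- The transpose (adjoint) of a continuous linear map between normed spaces. -/
noncomputable def clmTranspose {E F : Type*} [NormedAddCommGroup E] [NormedSpace ℝ E]
    [NormedAddCommGroup F] [NormedSpace ℝ F] (A : E →L[ℝ] F) :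
    StrongDual ℝ F →L[ℝ] StrongDual ℝ E :=
  (ContinuousLinearMap.compL ℝ E F ℝ).flip A

/-!
If `T` is a linear isometry of `X**` with `T⁻¹ κ(X) ⊆ κ(X)`, `Q f = 0` and `Q (T f) ≠ 0`, put
`y := T⁻¹ (Q (T f)) ∈ κ(X) \ {0}`. Then `Q (f - y) = -y ≠ 0`, so strictness for `f - y` gives
`‖f‖ < ‖f - y‖`, while `‖f - y‖ = ‖T f - Q (T f)‖ < ‖T f‖ = ‖f‖` by strictness for `T f`.
The double transposes of the linear parts `π g` are such isometries, with inverse `π g⁻¹`.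
-/

section Projection

variable {𝕜 E : Type*} [NormedField 𝕜] [NormedAddCommGroup E] [NormedSpace 𝕜 E]

theorem LinearIsometryEquiv.proj_apply_eq_zero_of_norm_sub_lt (Q : E →L[𝕜] E)
    (hproj : ∀ f, Q (Q f) = Q f) (hstrict : ∀ f, Q f ≠ 0 → ‖f - Q f‖ < ‖f‖) (T : E ≃ₗᵢ[𝕜] E)
    (hT : Set.MapsTo T.symm (Set.range Q) (Set.range Q)) {f : E} (hf : Q f = 0) :
    Q (T f) = 0 := by
  by_contra hne
  obtain ⟨w, hw⟩ := hT (Set.mem_range_self (T f))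
  set y := Q w
  have hy0 : y ≠ 0 := by simpa [y, hw] using hne
  have hQy : Q (f - y) = -y := by rw [Q.map_sub, hf, hproj, zero_sub]
  have hlt : ‖f‖ < ‖f - y‖ := by
    simpa [hQy] using hstrict (f - y) (by rwa [hQy, neg_ne_zero])
  have hsub : ‖f - y‖ = ‖T f - Q (T f)‖ := by
    rw [hw, ← T.norm_map, T.map_sub, T.apply_symm_apply]
  refine lt_irrefl ‖f‖ ?_
  calc ‖f‖ < ‖f - y‖ := hlt
    _ = ‖T f - Q (T f)‖ := hsub
    _ < ‖T f‖ := hstrict (T f) hne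
    _ = ‖f‖ := T.norm_map f

end Projection

section Transpose

variable {E F : Type*} [NormedAddCommGroup E] [NormedSpace ℝ E]
  [NormedAddCommGroup F] [NormedSpace ℝ F]

theorem clmTranspose_apply (A : E →L[ℝ] F) (φ : StrongDual ℝ F) :
    clmTranspose A φ = φ.comp A := rfl

noncomputable def LinearIsometryEquiv.transpose (e : E ≃ₗᵢ[ℝ] F) :
    StrongDual ℝ F ≃ₗᵢ[ℝ] StrongDual ℝ E where
  toFun := clmTranspose (e : E →L[ℝ] F)
  invFun := clmTranspose (e.symm : F →L[ℝ] E)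
  map_add' := (clmTranspose _).map_add
  map_smul' := (clmTranspose _).map_smul
  left_inv φ := by ext; simp [clmTranspose_apply]
  right_inv φ := by ext; simp [clmTranspose_apply]
  norm_map' φ := ContinuousLinearMap.opNorm_comp_linearIsometryEquiv φ e

theorem LinearIsometryEquiv.coe_transpose (e : E ≃ₗᵢ[ℝ] F) :
    (e.transpose : StrongDual ℝ F →L[ℝ] StrongDual ℝ E) = clmTranspose (e : E →L[ℝ] F) :=
  ContinuousLinearMap.ext fun _ => rfl

theorem LinearIsometryEquiv.transpose_transpose_symm_inclusionInDoubleDual (e : E ≃ₗᵢ[ℝ] F)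
    (x : F) :
    e.transpose.transpose.symm (inclusionInDoubleDual ℝ F x) =
      inclusionInDoubleDual ℝ E (e.symm x) := by
  ext; rfl

end Transpose

section AffineIsometricAction

variable {X G : Type*} [NormedAddCommGroup X] [NormedSpace ℝ X] [Group G] [MulAction G X]

noncomputable def linearPartEquiv (hiso : ∀ g : G, Isometry (fun x : X => g • x))
    (π : G → X →L[ℝ] X) (hπ : ∀ (g : G) (x : X), π g x = g • x - g • (0 : X)) (g : G) :
    X ≃ₗᵢ[ℝ] X where
  toLinearMap := π g
  invFun := π g⁻¹
  left_inv x := by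
    change π g⁻¹ (π g x) = x
    rw [hπ g x, map_sub, hπ, hπ]; simp
  right_inv x := by
    change π g (π g⁻¹ x) = x
    rw [hπ g⁻¹ x, map_sub, hπ, hπ]; simp
  norm_map' x := by
    simpa [← dist_eq_norm, hπ] using (hiso g).dist_eq x 0

theorem coe_linearPartEquiv (hiso : ∀ g : G, Isometry (fun x : X => g • x))
    (π : G → X →L[ℝ] X) (hπ : ∀ (g : G) (x : X), π g x = g • x - g • (0 : X)) (g : G) :
    (linearPartEquiv hiso π hπ g : X →L[ℝ] X) = π g := rfl

end AffineIsometricAction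

theorem stmt_0_general {X : Type*} [NormedAddCommGroup X] [NormedSpace ℝ X]
    {G : Type*} [Group G] [MulAction G X]
    (hiso : ∀ g : G, Isometry (fun x : X => g • x))
    (π : G → X →L[ℝ] X) (hπ : ∀ (g : G) (x : X), π g x = g • x - g • (0 : X))
    (Q : StrongDual ℝ (StrongDual ℝ X) →L[ℝ] StrongDual ℝ (StrongDual ℝ X))
    (hproj : ∀ f, Q (Q f) = Q f)
    (hrange : Set.range Q = Set.range (inclusionInDoubleDual ℝ X))
    (hstrict : ∀ f, Q f ≠ 0 → ‖f - Q f‖ < ‖f‖) :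
    ∀ (g : G) (f : StrongDual ℝ (StrongDual ℝ X)),
      Q f = 0 → Q (clmTranspose (clmTranspose (π g)) f) = 0 := by
  intro g f hf
  set e := linearPartEquiv hiso π hπ g
  have hT : clmTranspose (clmTranspose (π g)) = (e.transpose.transpose : _ →L[ℝ] _) := by
    rw [LinearIsometryEquiv.coe_transpose, LinearIsometryEquiv.coe_transpose,
      coe_linearPartEquiv]
  rw [hT]
  refine e.transpose.transpose.proj_apply_eq_zero_of_norm_sub_lt Q hproj hstrict ?_ hf
  rw [hrange]
  rintro _ ⟨x, rfl⟩
  exact ⟨e.symm x, (e.transpose_transpose_symm_inclusionInDoubleDual x).symm⟩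

/-- Let `X` be a Banach space and `Q : X** → X**` a bounded linear projection with range
`κ_X(X)` such that `‖f‖ > ‖f − Qf‖` for every `f ∉ ker Q`.  If a group `G` acts on `X` by
affine isometries with linear parts `π(g) x = g•x − g•0`, then the double-dual extensions
`π(g)** : X** → X**` map `ker Q` into `ker Q`. -/
theorem stmt_0 {X : Type*} [NormedAddCommGroup X] [NormedSpace ℝ X] [CompleteSpace X]
    {G : Type*} [Group G] [MulAction G X]
    (hiso : ∀ g : G, Isometry (fun x : X => g • x))
    (π : G → X →L[ℝ] X) (hπ : ∀ (g : G) (x : X), π g x = g • x - g • (0 : X))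
    (Q : StrongDual ℝ (StrongDual ℝ X) →L[ℝ] StrongDual ℝ (StrongDual ℝ X))
    (hproj : ∀ f, Q (Q f) = Q f)
    (hrange : Set.range Q = Set.range (inclusionInDoubleDual ℝ X))
    (hstrict : ∀ f, Q f ≠ 0 → ‖f - Q f‖ < ‖f‖) :
    ∀ (g : G) (f : StrongDual ℝ (StrongDual ℝ X)),
      Q f = 0 → Q (clmTranspose (clmTranspose (π g)) f) = 0 :=
  stmt_0_general hiso π hπ Q hproj hrange hstrict
end

section
/- Let G act by isometries on a pointed metric space (M,d,0) and let M/G be the space of orbit closures with the quotient metric d_{M/G}([Gx],[Gy]) = inf{d(x',y') : x' ∈ closure(Gx), y' ∈ closure(Gy)} and base point [G0]. For a Banach space X, the map Ψ : Lip_0(M/G, X) → Lip_0^G(M, X) given by Ψ(f)(x) = f([Gx]) is a surjective linear isometry onto the space of G-invariant base-point-preserving Lipschitz maps, where the norm is the Lipschitz constant. -/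
/-! An invariant Lipschitz map is continuous, hence constant on orbit closures. So for `x'`,
`y'` in the orbit closures of `x`, `y` we get `‖h x - h y‖ = ‖h x' - h y'‖ ≤ K d(x', y')`, and
taking the infimum gives `‖h x - h y‖ ≤ K d([Gx], [Gy])`: invariant `K`-Lipschitz maps factor
through the quotient map with the same constant. Conversely the quotient map is `1`-Lipschitz,
so composing with it does not increase Lipschitz constants. -/

open scoped NNReal
open MulAction Function

section OrbitClosure

variable {G M : Type*} [Monoid G] [MulAction G M] [TopologicalSpace M]

theorem eq_of_mem_closure_orbit {Y : Type*} [TopologicalSpace Y] [T2Space Y] {h : M → Y}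
    (hc : Continuous h) (hinv : ∀ (g : G) x, h (g • x) = h x) {x x' : M}
    (hx' : x' ∈ closure (orbit G x)) : h x' = h x := by
  refine closure_minimal ?_ (isClosed_eq hc continuous_const) hx'
  rintro _ ⟨g, rfl⟩
  exact hinv g x

end OrbitClosure

def orbitClosureDists (G : Type*) {M : Type*} [Monoid G] [MulAction G M] [PseudoMetricSpace M]
    (x y : M) : Set ℝ :=
  (fun p : M × M => dist p.1 p.2) '' (closure (orbit G x) ×ˢ closure (orbit G y))

section OrbitClosureDists

variable {G M : Type*} [PseudoMetricSpace M]

section Monoid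

variable [Monoid G] [MulAction G M]

theorem dist_mem_orbitClosureDists (x y : M) : dist x y ∈ orbitClosureDists G x y :=
  ⟨(x, y), ⟨subset_closure (mem_orbit_self x), subset_closure (mem_orbit_self y)⟩, rfl⟩

theorem bddBelow_orbitClosureDists (x y : M) : BddBelow (orbitClosureDists G x y) :=
  ⟨0, by rintro _ ⟨p, -, rfl⟩; exact dist_nonneg⟩

theorem sInf_orbitClosureDists_le_dist (x y : M) : sInf (orbitClosureDists G x y) ≤ dist x y :=
  csInf_le (bddBelow_orbitClosureDists x y) (dist_mem_orbitClosureDists x y)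

theorem dist_le_mul_sInf_orbitClosureDists {Y : Type*} [MetricSpace Y] {h : M → Y}
    {K : ℝ≥0} (hK : LipschitzWith K h) (hinv : ∀ (g : G) x, h (g • x) = h x) (x y : M) :
    dist (h x) (h y) ≤ K * sInf (orbitClosureDists G x y) := by
  rw [← smul_eq_mul, ← Real.sInf_smul_of_nonneg K.coe_nonneg]
  refine le_csInf ((Set.nonempty_of_mem (dist_mem_orbitClosureDists x y)).smul_set) ?_
  rintro _ ⟨_, ⟨⟨x', y'⟩, ⟨hx', hy'⟩, rfl⟩, rfl⟩
  dsimp only at hx' hy' ⊢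
  rw [← eq_of_mem_closure_orbit hK.continuous hinv hx',
    ← eq_of_mem_closure_orbit hK.continuous hinv hy']
  exact hK.dist_le_mul x' y'

end Monoid

theorem orbitClosureDists_smul_left [Group G] [MulAction G M] (g : G) (x y : M) :
    orbitClosureDists G (g • x) y = orbitClosureDists G x y := by
  rw [orbitClosureDists, orbit_smul, orbitClosureDists]

end OrbitClosureDists

/-- `q` identifies `N` isometrically with the space of orbit closures of `M` under the quotient
metric. -/
def IsOrbitClosureQuotient (G : Type*) {M N : Type*} [Monoid G] [MulAction G M]
    [PseudoMetricSpace M] [MetricSpace N] (q : M → N) : Prop :=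
  ∀ x y, dist (q x) (q y) = sInf (orbitClosureDists G x y)

namespace IsOrbitClosureQuotient

variable {G M N : Type*} [PseudoMetricSpace M] [MetricSpace N] {q : M → N}

section Monoid

variable [Monoid G] [MulAction G M] (hq : IsOrbitClosureQuotient G q)
include hq

theorem lipschitzWith_one : LipschitzWith 1 q :=
  .of_dist_le_mul fun x y => by
    simpa [hq x y] using sInf_orbitClosureDists_le_dist x y

theorem dist_le_mul_dist {Y : Type*} [MetricSpace Y] {h : M → Y} {K : ℝ≥0}
    (hK : LipschitzWith K h) (hinv : ∀ (g : G) x, h (g • x) = h x) (x y : M) :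
    dist (h x) (h y) ≤ K * dist (q x) (q y) :=
  (hq x y).symm ▸ dist_le_mul_sInf_orbitClosureDists hK hinv x y

theorem factorsThrough {Y : Type*} [MetricSpace Y] {h : M → Y} {K : ℝ≥0}
    (hK : LipschitzWith K h) (hinv : ∀ (g : G) x, h (g • x) = h x) : h.FactorsThrough q :=
  fun x y hxy => dist_le_zero.1 <| by simpa [hxy] using hq.dist_le_mul_dist hK hinv x y

end Monoid

section Group

variable [Group G] [MulAction G M] (hq : IsOrbitClosureQuotient G q)
include hq

theorem apply_smul (g : G) (x : M) : q (g • x) = q x :=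
  dist_eq_zero.1 <| by rw [hq, orbitClosureDists_smul_left, ← hq, dist_self]

theorem lipschitzWith_comp_iff (hsurj : Surjective q) {Y : Type*} [MetricSpace Y] {f : N → Y}
    {K : ℝ≥0} : LipschitzWith K (f ∘ q) ↔ LipschitzWith K f := by
  refine ⟨fun hfq => .of_dist_le_mul fun z w => ?_, fun hf => by
    simpa using hf.comp hq.lipschitzWith_one⟩
  obtain ⟨x, rfl⟩ := hsurj z
  obtain ⟨y, rfl⟩ := hsurj w
  exact hq.dist_le_mul_dist hfq (fun g x => congrArg f (hq.apply_smul g x)) x y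

end Group

end IsOrbitClosureQuotient

theorem stmt_4_general {M : Type*} [MetricSpace M] {G : Type*} [Group G] [MulAction G M]
    (base : M)
    {N : Type*} [MetricSpace N] (q : M → N) (hq : Function.Surjective q)
    (hdist : ∀ x y : M, dist (q x) (q y) = sInf ((fun p : M × M => dist p.1 p.2) ''
        (closure (MulAction.orbit G x) ×ˢ closure (MulAction.orbit G y))))
    {X : Type*} [NormedAddCommGroup X] [NormedSpace ℝ X] :
    (∀ (f₁ f₂ : N → X) (c : ℝ), (fun x : M => (c • f₁ + f₂) (q x)) = c • (f₁ ∘ q) + f₂ ∘ q) ∧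
    (∀ (f : N → X) (K : ℝ≥0), LipschitzWith K (f ∘ q) ↔ LipschitzWith K f) ∧
    Set.BijOn (fun f : N → X => f ∘ q)
      {f : N → X | f (q base) = 0 ∧ ∃ K : ℝ≥0, LipschitzWith K f}
      {h : M → X | h base = 0 ∧ (∃ K : ℝ≥0, LipschitzWith K h) ∧
        ∀ (g : G) (x : M), h (g • x) = h x} := by
  have hquot : IsOrbitClosureQuotient G q := hdist
  refine ⟨fun _ _ _ => rfl, fun f K => hquot.lipschitzWith_comp_iff hq, ?_,
    hq.injective_comp_right.injOn, ?_⟩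
  · rintro f ⟨hf0, K, hfK⟩
    exact ⟨hf0, ⟨K, (hquot.lipschitzWith_comp_iff hq).2 hfK⟩,
      fun g x => congrArg f (hquot.apply_smul g x)⟩
  · rintro h ⟨h0, ⟨K, hK⟩, hinv⟩
    have hfac := hquot.factorsThrough hK hinv
    have hcomp : extend q h 0 ∘ q = h := funext (hfac.extend_apply 0)
    refine ⟨extend q h 0, ⟨by rw [hfac.extend_apply, h0], K, ?_⟩, hcomp⟩
    exact (hquot.lipschitzWith_comp_iff hq).1 (by rwa [hcomp])

/-- Let `G` act by isometries on a pointed metric space `M` and let `N = M/G` be the space of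
orbit closures with the quotient metric (realized by a surjection `q : M → N` satisfying the
quotient-distance formula), with base point `q base`.  For a normed space `X`, the map
`f ↦ f ∘ q` is a linear bijection from `Lip₀(M/G, X)` onto the `G`-invariant members of
`Lip₀(M, X)` which preserves Lipschitz constants (i.e. it is a surjective linear isometry
for the Lipschitz norms). -/
theorem stmt_4 {M : Type*} [MetricSpace M] {G : Type*} [Group G] [MulAction G M]
    (hiso : ∀ g : G, Isometry (fun x : M => g • x)) (base : M)
    {N : Type*} [MetricSpace N] (q : M → N) (hq : Function.Surjective q)
    (hdist : ∀ x y : M, dist (q x) (q y) = sInf ((fun p : M × M => dist p.1 p.2) ''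
        (closure (MulAction.orbit G x) ×ˢ closure (MulAction.orbit G y))))
    {X : Type*} [NormedAddCommGroup X] [NormedSpace ℝ X] :
    (∀ (f₁ f₂ : N → X) (c : ℝ), (fun x : M => (c • f₁ + f₂) (q x)) = c • (f₁ ∘ q) + f₂ ∘ q) ∧
    (∀ (f : N → X) (K : ℝ≥0), LipschitzWith K (f ∘ q) ↔ LipschitzWith K f) ∧
    Set.BijOn (fun f : N → X => f ∘ q)
      {f : N → X | f (q base) = 0 ∧ ∃ K : ℝ≥0, LipschitzWith K f}
      {h : M → X | h base = 0 ∧ (∃ K : ℝ≥0, LipschitzWith K h) ∧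
        ∀ (g : G) (x : M), h (g • x) = h x} :=
  stmt_4_general base q hq hdist
end

section
/- Let G be an amenable group acting continuously on a metric space (M,d) by bi-Lipschitz bijections with uniform bounds: r·d(gx,gy) ≤ d(x,y) ≤ R·d(gx,gy) for all g ∈ G, x,y ∈ M, where 0 < r < R < ∞. Let M be a right-invariant mean on the bounded right-uniformly continuous functions on G. Then D(x,y) := M(g ↦ d(gx,gy)) defines a metric on M satisfying r·D(x,y) ≤ d(x,y) ≤ R·D(x,y), and G acts on (M,D) by isometries. -/
/-! Each orbit-distance function `g ↦ d(gx, gy)` lies in `C^b_ru(G)`: it is bounded by `d(x, y)/r`,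
and `|d(ghx, ghy) - d(gx, gy)| ≤ (d(hx, x) + d(hy, y))/r` is small uniformly in `g` once `h` is
close to `1`, by continuity of the orbit maps.  Positivity and normalization of the mean then
transfer the pointwise metric axioms and bi-Lipschitz bounds to `D`, and `D(gx, gy) = D(x, y)`
because `h ↦ d(hgx, hgy)` is a right translate of `h ↦ d(hx, hy)`. -/

/-- `f : G → ℝ` is bounded. -/
def IsBdd {G : Type*} (f : G → ℝ) : Prop := ∃ B : ℝ, ∀ g : G, |f g| ≤ B

/-- `f` is right-uniformly continuous. -/
def IsRUC {G : Type*} [Group G] [TopologicalSpace G] (f : G → ℝ) : Prop :=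
  ∀ ε > (0 : ℝ), ∃ U ∈ nhds (1 : G), ∀ h ∈ U, ∀ g : G, |f (g * h) - f g| ≤ ε

/-- Membership in `C^b_ru(G)`: bounded and right-uniformly continuous. -/
def IsRUCB {G : Type*} [Group G] [TopologicalSpace G] (f : G → ℝ) : Prop :=
  IsBdd f ∧ IsRUC f

open Filter Topology

section RUCB

variable {G : Type*} [Group G] [TopologicalSpace G] {f f' : G → ℝ}

lemma isRUCB_const (c : ℝ) : IsRUCB fun _ : G => c :=
  ⟨⟨|c|, fun _ => le_rfl⟩, fun _ hε => ⟨Set.univ, univ_mem, fun _ _ _ => by simpa using hε.le⟩⟩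

lemma IsRUCB.add (hf : IsRUCB f) (hf' : IsRUCB f') : IsRUCB (f + f') := by
  obtain ⟨⟨B, hB⟩, hfu⟩ := hf
  obtain ⟨⟨B', hB'⟩, hfu'⟩ := hf'
  refine ⟨⟨B + B', fun g => (abs_add_le _ _).trans (add_le_add (hB g) (hB' g))⟩,
    fun ε hε => ?_⟩
  obtain ⟨U, hU, hfU⟩ := hfu (ε / 2) (half_pos hε)
  obtain ⟨V, hV, hfV⟩ := hfu' (ε / 2) (half_pos hε)
  refine ⟨U ∩ V, inter_mem hU hV, fun h hh g => ?_⟩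
  calc |(f + f') (g * h) - (f + f') g| = |(f (g * h) - f g) + (f' (g * h) - f' g)| := by
        simp only [Pi.add_apply]; ring_nf
    _ ≤ |f (g * h) - f g| + |f' (g * h) - f' g| := abs_add_le _ _
    _ ≤ ε / 2 + ε / 2 := add_le_add (hfU h hh.1 g) (hfV h hh.2 g)
    _ = ε := add_halves ε

lemma IsRUCB.const_mul (hf : IsRUCB f) (c : ℝ) : IsRUCB fun g => c * f g := by
  obtain ⟨⟨B, hB⟩, hfu⟩ := hf
  refine ⟨⟨|c| * B, fun g => by rw [abs_mul]; gcongr; exact hB g⟩, fun ε hε => ?_⟩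
  obtain ⟨U, hU, hfU⟩ := hfu (ε / (|c| + 1)) (by positivity)
  refine ⟨U, hU, fun h hh g => ?_⟩
  calc |c * f (g * h) - c * f g| = |c| * |f (g * h) - f g| := by rw [← mul_sub, abs_mul]
    _ ≤ |c| * (ε / (|c| + 1)) := by gcongr; exact hfU h hh g
    _ ≤ ε := by
        rw [mul_div_assoc', div_le_iff₀ (by positivity)]
        nlinarith [abs_nonneg c]

lemma IsRUCB.sub (hf : IsRUCB f) (hf' : IsRUCB f') : IsRUCB (f - f') := by
  convert hf.add (hf'.const_mul (-1)) using 1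
  ext g
  simp only [Pi.sub_apply, Pi.add_apply]
  ring

end RUCB

lemma mean_const {G : Type*} (Mn : (G → ℝ) →ₗ[ℝ] ℝ) (hone : Mn (fun _ => 1) = 1) (c : ℝ) :
    Mn (fun _ => c) = c := by
  have hc : (fun _ : G => c) = c • fun _ => (1 : ℝ) := by ext; simp
  rw [hc, map_smul, hone, smul_eq_mul, mul_one]

lemma mean_mono {G : Type*} [Group G] [TopologicalSpace G] (Mn : (G → ℝ) →ₗ[ℝ] ℝ)
    (hpos : ∀ f : G → ℝ, IsRUCB f → (∀ g, 0 ≤ f g) → 0 ≤ Mn f)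
    {f f' : G → ℝ} (hf : IsRUCB f) (hf' : IsRUCB f') (hle : f ≤ f') : Mn f ≤ Mn f' := by
  have h := hpos (f' - f) (hf'.sub hf) fun g => sub_nonneg.2 (hle g)
  rwa [map_sub, sub_nonneg] at h

lemma isRUCB_dist_smul {G M : Type*} [Group G] [TopologicalSpace G] [PseudoMetricSpace M]
    [MulAction G M] [ContinuousSMul G M] {r : ℝ} (hr : 0 < r)
    (hlip : ∀ (g : G) (x y : M), r * dist (g • x) (g • y) ≤ dist x y) (x y : M) :
    IsRUCB fun g : G => dist (g • x) (g • y) := by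
  have hdist : ∀ (g : G) (x y : M), dist (g • x) (g • y) ≤ dist x y / r := fun g x y => by
    rw [le_div_iff₀ hr, mul_comm]
    exact hlip g x y
  refine ⟨⟨dist x y / r, fun g => by rw [abs_of_nonneg dist_nonneg]; exact hdist g x y⟩,
    fun ε hε => ?_⟩
  have horbit : ∀ z : M, ∀ᶠ h in 𝓝 (1 : G), dist (h • z) z < r * ε / 2 := fun z => by
    have hz : Tendsto (fun h : G => h • z) (𝓝 1) (𝓝 z) :=
      (continuous_id.smul continuous_const).tendsto' 1 z (one_smul G z)
    exact Metric.tendsto_nhds.1 hz _ (by positivity)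
  refine ⟨_, (horbit x).and (horbit y), fun h ⟨hx, hy⟩ g => ?_⟩
  calc |dist ((g * h) • x) ((g * h) • y) - dist (g • x) (g • y)|
      ≤ dist (g • h • x) (g • x) + dist (g • h • y) (g • y) := by
        rw [mul_smul, mul_smul, ← Real.dist_eq]
        exact dist_dist_dist_le _ _ _ _
    _ ≤ dist (h • x) x / r + dist (h • y) y / r := add_le_add (hdist g _ _) (hdist g _ _)
    _ ≤ ε := by
        rw [← add_div, div_le_iff₀ hr]
        linarith

section MeanDist

variable {G M : Type*} [PseudoMetricSpace M] (Mn : (G → ℝ) →ₗ[ℝ] ℝ)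

def meanDist [SMul G M] (x y : M) : ℝ := Mn fun g => dist (g • x) (g • y)

lemma meanDist_self [SMul G M] (x : M) : meanDist Mn x x = 0 := by
  simp [meanDist, ← Pi.zero_def]

lemma meanDist_comm [SMul G M] (x y : M) : meanDist Mn x y = meanDist Mn y x := by
  simp only [meanDist, dist_comm]

variable [Group G] [TopologicalSpace G] [MulAction G M]

lemma meanDist_nonneg (hpos : ∀ f : G → ℝ, IsRUCB f → (∀ g, 0 ≤ f g) → 0 ≤ Mn f) {x y : M}
    (hxy : IsRUCB fun g : G => dist (g • x) (g • y)) :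
    0 ≤ meanDist Mn x y :=
  hpos _ hxy fun _ => dist_nonneg

lemma meanDist_triangle (hpos : ∀ f : G → ℝ, IsRUCB f → (∀ g, 0 ≤ f g) → 0 ≤ Mn f)
    {x y z : M} (hxy : IsRUCB fun g : G => dist (g • x) (g • y))
    (hyz : IsRUCB fun g : G => dist (g • y) (g • z))
    (hxz : IsRUCB fun g : G => dist (g • x) (g • z)) :
    meanDist Mn x z ≤ meanDist Mn x y + meanDist Mn y z := by
  rw [meanDist, meanDist, meanDist, ← map_add]
  exact mean_mono Mn hpos hxz (hxy.add hyz) fun g => dist_triangle _ _ _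

lemma mul_meanDist_le_dist (hpos : ∀ f : G → ℝ, IsRUCB f → (∀ g, 0 ≤ f g) → 0 ≤ Mn f)
    (hone : Mn (fun _ => 1) = 1) {x y : M} (hxy : IsRUCB fun g : G => dist (g • x) (g • y))
    {c : ℝ} (hc : ∀ g : G, c * dist (g • x) (g • y) ≤ dist x y) :
    c * meanDist Mn x y ≤ dist x y := by
  rw [meanDist, ← smul_eq_mul, ← map_smul, ← mean_const Mn hone (dist x y)]
  exact mean_mono Mn hpos (hxy.const_mul c) (isRUCB_const _) hc

lemma dist_le_mul_meanDist (hpos : ∀ f : G → ℝ, IsRUCB f → (∀ g, 0 ≤ f g) → 0 ≤ Mn f)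
    (hone : Mn (fun _ => 1) = 1) {x y : M} (hxy : IsRUCB fun g : G => dist (g • x) (g • y))
    {c : ℝ} (hc : ∀ g : G, dist x y ≤ c * dist (g • x) (g • y)) :
    dist x y ≤ c * meanDist Mn x y := by
  rw [meanDist, ← smul_eq_mul, ← map_smul, ← mean_const Mn hone (dist x y)]
  exact mean_mono Mn hpos (isRUCB_const _) (hxy.const_mul c) hc

lemma meanDist_smul (hinv : ∀ f : G → ℝ, IsRUCB f → ∀ a : G, Mn (fun h => f (h * a⁻¹)) = Mn f)
    {x y : M} (hxy : IsRUCB fun g : G => dist (g • x) (g • y)) (a : G) :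
    meanDist Mn (a • x) (a • y) = meanDist Mn x y := by
  simpa [meanDist, mul_smul] using hinv _ hxy a⁻¹

end MeanDist

lemma meanDist_pos {G M : Type*} [Group G] [TopologicalSpace G] [MetricSpace M] [MulAction G M]
    (Mn : (G → ℝ) →ₗ[ℝ] ℝ) (hpos : ∀ f : G → ℝ, IsRUCB f → (∀ g, 0 ≤ f g) → 0 ≤ Mn f)
    (hone : Mn (fun _ => 1) = 1) {x y : M} (hxy : IsRUCB fun g : G => dist (g • x) (g • y))
    {c : ℝ} (hc : ∀ g : G, dist x y ≤ c * dist (g • x) (g • y)) (hne : x ≠ y) :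
    0 < meanDist Mn x y := by
  refine (meanDist_nonneg Mn hpos hxy).lt_of_ne fun h0 => hne (dist_le_zero.1 ?_)
  simpa [← h0] using dist_le_mul_meanDist Mn hpos hone hxy hc

theorem stmt_10_general {G : Type*} [Group G] [TopologicalSpace G]
    {M : Type*} [MetricSpace M] [MulAction G M]
    (hcont : Continuous fun p : G × M => p.1 • p.2)
    (r R : ℝ) (hr : 0 < r)
    (hbil : ∀ (g : G) (x y : M),
      r * dist (g • x) (g • y) ≤ dist x y ∧ dist x y ≤ R * dist (g • x) (g • y))
    (Mn : (G → ℝ) →ₗ[ℝ] ℝ)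
    (hone : Mn (fun _ => 1) = 1)
    (hpos : ∀ f : G → ℝ, IsRUCB f → (∀ g, 0 ≤ f g) → 0 ≤ Mn f)
    (hinv : ∀ f : G → ℝ, IsRUCB f → ∀ a : G, Mn (fun h => f (h * a⁻¹)) = Mn f) :
    let D : M → M → ℝ := fun x y => Mn (fun g => dist (g • x) (g • y))
    (∀ x y : M, IsRUCB (fun g : G => dist (g • x) (g • y))) ∧
    (∀ x : M, D x x = 0) ∧
    (∀ x y : M, x ≠ y → 0 < D x y) ∧
    (∀ x y : M, D x y = D y x) ∧
    (∀ x y z : M, D x z ≤ D x y + D y z) ∧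
    (∀ x y : M, r * D x y ≤ dist x y ∧ dist x y ≤ R * D x y) ∧
    (∀ (g : G) (x y : M), D (g • x) (g • y) = D x y) := by
  intro D
  have : ContinuousSMul G M := ⟨hcont⟩
  have hmem := isRUCB_dist_smul hr fun g x y => (hbil g x y).1
  exact ⟨hmem, meanDist_self Mn,
    fun x y => meanDist_pos Mn hpos hone (hmem x y) fun g => (hbil g x y).2,
    meanDist_comm Mn,
    fun x y z => meanDist_triangle Mn hpos (hmem x y) (hmem y z) (hmem x z),
    fun x y => ⟨mul_meanDist_le_dist Mn hpos hone (hmem x y) fun g => (hbil g x y).1,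
      dist_le_mul_meanDist Mn hpos hone (hmem x y) fun g => (hbil g x y).2⟩,
    fun g x y => meanDist_smul Mn hinv (hmem x y) g⟩

/-- Averaging the metric under an amenable group action.  If `G` acts continuously on `(M, d)`
by uniformly bi-Lipschitz bijections, `r·d(gx, gy) ≤ d(x, y) ≤ R·d(gx, gy)`, and `Mn` is a
right-invariant mean on `C^b_ru(G)`, then each `g ↦ d(gx, gy)` lies in `C^b_ru(G)`, the
formula `D(x, y) = Mn(g ↦ d(gx, gy))` defines a metric on `M` bi-Lipschitz equivalent to `d`
(with `r·D ≤ d ≤ R·D`), and `G` acts on `(M, D)` by isometries. -/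
theorem stmt_10 {G : Type*} [Group G] [TopologicalSpace G] [IsTopologicalGroup G]
    {M : Type*} [MetricSpace M] [MulAction G M]
    (hcont : Continuous fun p : G × M => p.1 • p.2)
    (r R : ℝ) (hr : 0 < r) (hrR : r < R)
    (hbil : ∀ (g : G) (x y : M),
      r * dist (g • x) (g • y) ≤ dist x y ∧ dist x y ≤ R * dist (g • x) (g • y))
    (Mn : (G → ℝ) →ₗ[ℝ] ℝ)
    (hone : Mn (fun _ => 1) = 1)
    (hpos : ∀ f : G → ℝ, IsRUCB f → (∀ g, 0 ≤ f g) → 0 ≤ Mn f)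
    (hinv : ∀ f : G → ℝ, IsRUCB f → ∀ a : G, Mn (fun h => f (h * a⁻¹)) = Mn f) :
    let D : M → M → ℝ := fun x y => Mn (fun g => dist (g • x) (g • y))
    (∀ x y : M, IsRUCB (fun g : G => dist (g • x) (g • y))) ∧
    (∀ x : M, D x x = 0) ∧
    (∀ x y : M, x ≠ y → 0 < D x y) ∧
    (∀ x y : M, D x y = D y x) ∧
    (∀ x y z : M, D x z ≤ D x y + D y z) ∧
    (∀ x y : M, r * D x y ≤ dist x y ∧ dist x y ≤ R * D x y) ∧
    (∀ (g : G) (x y : M), D (g • x) (g • y) = D x y) :=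
  stmt_10_general hcont r R hr hbil Mn hone hpos hinv
end

section
/- Let G act by isometries on a pointed metric space M and Y_G := closed span{δ(gx) − δ(x) : g ∈ G, x ∈ M} ⊆ F(M). Then the quotient Banach space F(M)/Y_G is linearly isometric to F(M/G) via the map Λ determined by Λ([δ(x)]) = δ([Gx]), where M/G is the space of orbit closures with the quotient metric and base point [G0]. -/
/-!
Lifting `δ' ∘ q` gives a contraction `T : F(M) → F(M/G)` that kills every `δ(gx) − δ(x)`,
hence `Y_G`, and so descends to a contraction `Λ` on `F(M)/Y_G`. Conversely, `δ(x') − δ(x) ∈ Y_G`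
whenever `x'` lies in the closure of `Gx`, so `x ↦ [δ x]` is 1-Lipschitz for the orbit-closure
distance, factors through `M/G`, and linearizes to a contraction `S : F(M/G) → F(M)/Y_G`.
`S` and `Λ` are inverse to each other on the `δ`'s, hence everywhere by density, and mutually
inverse contractions are isometries.
-/

open scoped NNReal

/-- `(V, δ)` is (a realization of) the Lipschitz-free space over the pointed metric space
`(M, base)`: `δ` is an isometric embedding sending `base` to `0` with linearly dense range,
and every real-valued Lipschitz function on `M` vanishing at `base` extends to a continuous
linear functional on `V` of the same norm. -/
def IsFreeSpace {M V : Type*} [MetricSpace M] [NormedAddCommGroup V] [NormedSpace ℝ V]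
    (base : M) (δ : M → V) : Prop :=
  Isometry δ ∧ δ base = 0 ∧ Dense (Submodule.span ℝ (Set.range δ) : Set V) ∧
  ∀ (K : ℝ≥0) (h : M → ℝ), LipschitzWith K h → h base = 0 →
    ∃ f : V →L[ℝ] ℝ, ‖f‖ ≤ K ∧ ∀ m : M, f (δ m) = h m

namespace Submodule

variable {𝕜 E F : Type*} [NontriviallyNormedField 𝕜] [SeminormedAddCommGroup E] [NormedSpace 𝕜 E]
  [SeminormedAddCommGroup F] [NormedSpace 𝕜 F] {S : Submodule 𝕜 E}

theorem norm_liftQL_le (f : E →L[𝕜] F) (h : S ≤ f.ker) : ‖S.liftQL f h‖ ≤ ‖f‖ :=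
  ContinuousLinearMap.opNorm_le_bound _ (norm_nonneg f) fun x =>
    (QuotientAddGroup.norm_lift_apply_le
      (f.toLinearMap.toAddMonoidHom.mkNormedAddGroupHom ‖f‖ f.le_opNorm) h x).trans
      (mul_le_mul_of_nonneg_right
        (AddMonoidHom.mkNormedAddGroupHom_norm_le _ (norm_nonneg f) _) (norm_nonneg x))

theorem ext_mkQL {G : Type*} [TopologicalSpace G] [AddCommGroup G] [Module 𝕜 G]
    {f g : E ⧸ S →L[𝕜] G} (h : f ∘L S.mkQL = g ∘L S.mkQL) : f = g :=
  ContinuousLinearMap.coe_injective <| linearMap_qext S congr(($h : E →ₗ[𝕜] G))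

end Submodule

namespace LinearIsometryEquiv

variable {𝕜 E F : Type*} [NontriviallyNormedField 𝕜] [SeminormedAddCommGroup E] [NormedSpace 𝕜 E]
  [SeminormedAddCommGroup F] [NormedSpace 𝕜 F]

def ofNormLeOne (f : E →L[𝕜] F) (g : F →L[𝕜] E) (hf : ‖f‖ ≤ 1) (hg : ‖g‖ ≤ 1)
    (hgf : g ∘L f = .id 𝕜 E) (hfg : f ∘L g = .id 𝕜 F) : E ≃ₗᵢ[𝕜] F where
  toLinearEquiv := .ofLinearMap (f := (f : E →ₗ[𝕜] F)) (g := (g : F →ₗ[𝕜] E))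
    congr(($hfg : F →ₗ[𝕜] F)) congr(($hgf : E →ₗ[𝕜] E))
  norm_map' x := by
    refine le_antisymm ((f.le_of_opNorm_le hf x).trans_eq (one_mul _)) ?_
    calc ‖x‖ = ‖g (f x)‖ := by rw [← ContinuousLinearMap.comp_apply, hgf]; rfl
      _ ≤ ‖f x‖ := g.le_of_opNorm_le hg (f x) |>.trans_eq (one_mul _)

end LinearIsometryEquiv

section OrbitClosureDist

open MulAction

variable {M : Type*} [MetricSpace M] (G : Type*) [Monoid G] [MulAction G M]

/-- The metric `d_{M/G}([Gx], [Gy])` of the orbit-closure space. -/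
noncomputable def orbitClosureDist (x y : M) : ℝ :=
  sInf ((fun p : M × M => dist p.1 p.2) '' (closure (orbit G x) ×ˢ closure (orbit G y)))

variable {G}

theorem orbitClosureDist_le {x y x' y' : M} (hx' : x' ∈ closure (orbit G x))
    (hy' : y' ∈ closure (orbit G y)) : orbitClosureDist G x y ≤ dist x' y' :=
  csInf_le ⟨0, by rintro _ ⟨p, -, rfl⟩; exact dist_nonneg⟩ ⟨(x', y'), ⟨hx', hy'⟩, rfl⟩

theorem orbitClosureDist_le_dist (x y : M) : orbitClosureDist G x y ≤ dist x y :=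
  orbitClosureDist_le (subset_closure (mem_orbit_self x)) (subset_closure (mem_orbit_self y))

theorem orbitClosureDist_nonneg (x y : M) : 0 ≤ orbitClosureDist G x y :=
  Real.sInf_nonneg (by rintro _ ⟨p, -, rfl⟩; exact dist_nonneg)

theorem orbitClosureDist_smul_left_self (g : G) (x : M) : orbitClosureDist G (g • x) x = 0 :=
  le_antisymm ((orbitClosureDist_le (subset_closure (mem_orbit_self _))
    (subset_closure (mem_orbit x g))).trans_eq (dist_self _)) (orbitClosureDist_nonneg _ _)

theorem le_orbitClosureDist {x y : M} {c : ℝ}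
    (h : ∀ x' ∈ closure (orbit G x), ∀ y' ∈ closure (orbit G y), c ≤ dist x' y') :
    c ≤ orbitClosureDist G x y :=
  le_csInf ⟨dist x y, (x, y), ⟨subset_closure (mem_orbit_self x),
    subset_closure (mem_orbit_self y)⟩, rfl⟩ (by rintro _ ⟨p, ⟨hx, hy⟩, rfl⟩; exact h _ hx _ hy)

variable {R V : Type*} [Ring R] [SeminormedAddCommGroup V] [Module R V] {δ : M → V}
  {Y : Submodule R V}

theorem sub_mem_of_mem_closure_orbit (hδ : Continuous δ) (hYc : IsClosed (Y : Set V))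
    (hY : ∀ (g : G) (x : M), δ (g • x) - δ x ∈ Y) {x x' : M} (hx' : x' ∈ closure (orbit G x)) :
    δ x' - δ x ∈ Y :=
  closure_minimal (s := orbit G x) (by rintro _ ⟨g, rfl⟩; exact hY g x)
    (hYc.preimage (hδ.sub continuous_const)) hx'

theorem norm_mk_sub_le_orbitClosureDist (hδ : LipschitzWith 1 δ) (hYc : IsClosed (Y : Set V))
    (hY : ∀ (g : G) (x : M), δ (g • x) - δ x ∈ Y) (x y : M) :
    ‖Y.mkQ (δ x - δ y)‖ ≤ orbitClosureDist G x y := by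
  refine le_orbitClosureDist fun x' hx' y' hy' => ?_
  have hmk : Y.mkQ (δ x - δ y) = Y.mkQ (δ x' - δ y') := by
    rw [Submodule.mkQ_apply, Submodule.mkQ_apply, Submodule.Quotient.eq]
    convert Y.sub_mem (sub_mem_of_mem_closure_orbit hδ.continuous hYc hY hy')
      (sub_mem_of_mem_closure_orbit hδ.continuous hYc hY hx') using 1
    abel
  calc ‖Y.mkQ (δ x - δ y)‖ = ‖Y.mkQ (δ x' - δ y')‖ := by rw [hmk]
    _ ≤ ‖δ x' - δ y'‖ := Submodule.Quotient.norm_mk_le _ _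
    _ ≤ dist x' y' := by simpa [← dist_eq_norm] using hδ.dist_le_mul x' y'

end OrbitClosureDist

namespace IsFreeSpace

variable {M V W : Type*} [MetricSpace M] [NormedAddCommGroup V] [NormedSpace ℝ V]
  [NormedAddCommGroup W] [NormedSpace ℝ W] {base : M} {δ : M → V}

theorem norm_linearCombination_le (hfree : IsFreeSpace base δ) {K : ℝ≥0} {L : M → W}
    (hL : LipschitzWith K L) (hL0 : L base = 0) (a : M →₀ ℝ) :
    ‖Finsupp.linearCombination ℝ L a‖ ≤ K * ‖Finsupp.linearCombination ℝ δ a‖ := by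
  obtain ⟨φ, hφ, hφa⟩ := exists_dual_vector'' ℝ (Finsupp.linearCombination ℝ L a)
  have hφL : LipschitzWith K (φ ∘ L) :=
    (φ.lipschitz.comp hL).weaken (mul_le_of_le_one_left K.2 (by exact_mod_cast hφ))
  obtain ⟨f, hf, hfδ⟩ := hfree.2.2.2 K _ hφL (by simp [hL0])
  have hφf : φ (Finsupp.linearCombination ℝ L a) = f (Finsupp.linearCombination ℝ δ a) := by
    simp only [Finsupp.linearCombination_apply, map_finsuppSum, map_smul, hfδ,
      Function.comp_apply]
  calc ‖Finsupp.linearCombination ℝ L a‖ = f (Finsupp.linearCombination ℝ δ a) := by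
        rw [← hφf, hφa]; rfl
    _ ≤ ‖f‖ * ‖Finsupp.linearCombination ℝ δ a‖ := (le_abs_self _).trans (f.le_opNorm _)
    _ ≤ K * ‖Finsupp.linearCombination ℝ δ a‖ := by gcongr

theorem lift [CompleteSpace W] (hfree : IsFreeSpace base δ) {K : ℝ≥0} {L : M → W}
    (hL : LipschitzWith K L) (hL0 : L base = 0) :
    ∃ T : V →L[ℝ] W, ‖T‖ ≤ K ∧ ∀ x, T (δ x) = L x := by
  have hdense : DenseRange (Finsupp.linearCombination ℝ δ) := by
    simpa [DenseRange, ← LinearMap.coe_range, Finsupp.range_linearCombination] using hfree.2.2.1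
  have hbound := hfree.norm_linearCombination_le hL hL0
  refine ⟨(Finsupp.linearCombination ℝ L).extendOfNorm (Finsupp.linearCombination ℝ δ),
    LinearMap.opNorm_extendOfNorm_le hdense K.2 hbound, fun x => ?_⟩
  simpa using LinearMap.extendOfNorm_eq hdense ⟨K, hbound⟩ (Finsupp.single x 1)

theorem clm_ext {E : Type*} [TopologicalSpace E] [AddCommMonoid E] [Module ℝ E] [T2Space E]
    (hfree : IsFreeSpace base δ) {f g : V →L[ℝ] E} (h : ∀ x, f (δ x) = g (δ x)) : f = g :=
  ContinuousLinearMap.ext_on hfree.2.2.1 (by rintro _ ⟨x, rfl⟩; exact h x)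

end IsFreeSpace

theorem Function.Surjective.exists_lipschitzWith_one_comp_eq {M N X : Type*}
    [PseudoMetricSpace N] [MetricSpace X] {q : M → N} (hq : Function.Surjective q) {f : M → X}
    (hf : ∀ x y, dist (f x) (f y) ≤ dist (q x) (q y)) :
    ∃ F : N → X, LipschitzWith 1 F ∧ ∀ x, F (q x) = f x := by
  refine ⟨f ∘ Function.surjInv hq, LipschitzWith.mk_one fun n n' => ?_, fun x => ?_⟩
  · simpa [Function.surjInv_eq hq] using hf (Function.surjInv hq n) (Function.surjInv hq n')
  · simpa [Function.surjInv_eq hq] using hf (Function.surjInv hq (q x)) x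

theorem stmt_14_general {M : Type*} [MetricSpace M] (base : M)
    {G : Type*} [Group G] [MulAction G M]
    {N : Type*} [MetricSpace N] (q : M → N) (hq : Function.Surjective q)
    (hdist : ∀ x y : M, dist (q x) (q y) = sInf ((fun p : M × M => dist p.1 p.2) ''
        (closure (MulAction.orbit G x) ×ˢ closure (MulAction.orbit G y))))
    {V : Type*} [NormedAddCommGroup V] [NormedSpace ℝ V] [CompleteSpace V]
    (δ : M → V) (hfree : IsFreeSpace base δ)
    {W : Type*} [NormedAddCommGroup W] [NormedSpace ℝ W] [CompleteSpace W]
    (δ' : N → W) (hfree' : IsFreeSpace (q base) δ') :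
    let Y_G : Submodule ℝ V :=
      (Submodule.span ℝ {v : V | ∃ (g : G) (x : M), v = δ (g • x) - δ x}).topologicalClosure
    ∃ Λ : (V ⧸ Y_G) ≃ₗᵢ[ℝ] W,
      ∀ x : M, Λ (Submodule.Quotient.mk (δ x)) = δ' (q x) := by
  intro Y_G
  have hYc : IsClosed (Y_G : Set V) := Submodule.isClosed_topologicalClosure _
  have hqdist : ∀ x y, dist (q x) (q y) = orbitClosureDist G x y := hdist
  have hδY : ∀ (g : G) (x : M), δ (g • x) - δ x ∈ Y_G := fun g x =>
    Submodule.le_topologicalClosure _ (Submodule.subset_span ⟨g, x, rfl⟩)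
  have hq_smul (g : G) (x : M) : q (g • x) = q x :=
    dist_eq_zero.mp ((hqdist _ _).trans (orbitClosureDist_smul_left_self g x))
  obtain ⟨T, hT, hTδ⟩ := hfree.lift (L := δ' ∘ q) (hfree'.1.lipschitz.comp
    (LipschitzWith.mk_one fun x y => (hqdist x y).trans_le (orbitClosureDist_le_dist x y)))
    hfree'.2.1
  have hYker : Y_G ≤ T.ker := Submodule.topologicalClosure_minimal _
    (Submodule.span_le.mpr (by rintro _ ⟨g, x, rfl⟩; simp [hTδ, hq_smul])) T.isClosed_ker
  let Λ := Y_G.liftQL T hYker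
  obtain ⟨R, hRlip, hRq⟩ := hq.exists_lipschitzWith_one_comp_eq (f := Y_G.mkQ ∘ δ) fun x y => by
    simpa [dist_eq_norm, hqdist] using
      norm_mk_sub_le_orbitClosureDist hfree.1.lipschitz hYc hδY x y
  obtain ⟨S, hS, hSδ'⟩ := hfree'.lift hRlip (by simp [hRq, hfree.2.1])
  have hSΛ : S ∘L Λ = .id ℝ _ :=
    Submodule.ext_mkQL (hfree.clm_ext fun x => by simp [Λ, hTδ, hSδ', hRq])
  have hΛS : Λ ∘L S = .id ℝ _ := hfree'.clm_ext fun n => by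
    obtain ⟨x, rfl⟩ := hq n
    simp [Λ, hSδ', hRq, hTδ]
  exact ⟨.ofNormLeOne Λ S ((Submodule.norm_liftQL_le T hYker).trans (by simpa using hT))
    (by simpa using hS) hSΛ hΛS, hTδ⟩

/-- Let `G` act by isometries on a pointed metric space `M`, let `(V, δ)` be the free space
over `M`, let `N = M/G` be the space of orbit closures with the quotient metric (realized by
a surjection `q`), and let `(W, δ')` be the free space over `N`.  With
`Y_G := closed span {δ(gx) − δ(x)}`, the quotient Banach space `V ⧸ Y_G` is linearly
isometric to `W = F(M/G)` via the map `Λ` determined by `Λ[δ(x)] = δ'([Gx])`. -/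
theorem stmt_14 {M : Type*} [MetricSpace M] (base : M)
    {G : Type*} [Group G] [MulAction G M]
    (hisoM : ∀ g : G, Isometry (fun x : M => g • x))
    {N : Type*} [MetricSpace N] (q : M → N) (hq : Function.Surjective q)
    (hdist : ∀ x y : M, dist (q x) (q y) = sInf ((fun p : M × M => dist p.1 p.2) ''
        (closure (MulAction.orbit G x) ×ˢ closure (MulAction.orbit G y))))
    {V : Type*} [NormedAddCommGroup V] [NormedSpace ℝ V] [CompleteSpace V]
    (δ : M → V) (hfree : IsFreeSpace base δ)
    {W : Type*} [NormedAddCommGroup W] [NormedSpace ℝ W] [CompleteSpace W]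
    (δ' : N → W) (hfree' : IsFreeSpace (q base) δ') :
    let Y_G : Submodule ℝ V :=
      (Submodule.span ℝ {v : V | ∃ (g : G) (x : M), v = δ (g • x) - δ x}).topologicalClosure
    ∃ Λ : (V ⧸ Y_G) ≃ₗᵢ[ℝ] W,
      ∀ x : M, Λ (Submodule.Quotient.mk (δ x)) = δ' (q x) :=
  stmt_14_general base q hq hdist δ hfree δ' hfree'
end

section
/- Let G be a compact group acting continuously by isometries on a pointed metric space M, and let R_G : F(M) → F(M) be the averaging projection R_G(x) = ∫_G T_g(x) dμ(g), where T_g is the linear isometry of F(M) with T_g δ(m) = δ(gm) − δ(g0). Then the map M/G → F(M), [Gx] ↦ R_G(δ(x)), is well-defined and 1-Lipschitz with respect to the quotient metric, using that R_G(δ(gx)) = R_G(δ(x)) for all g ∈ G, x ∈ M. -/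
/-!
Since `δ` and every `T_g` are isometries, `f x = R_G(δ x)` is an average of `1`-Lipschitz maps,
hence `1`-Lipschitz. Right invariance of `μ` gives `f (g • x) = f x`, so by continuity `f` is
constant on orbit closures, and for `x' ∈ closure (Gx)`, `y' ∈ closure (Gy)` we get
`‖f x - f y‖ = ‖f x' - f y'‖ ≤ d(x', y')`. Taking the infimum bounds `‖f x - f y‖` by the
quotient distance, so `f` descends to a `1`-Lipschitz map on `M/G`.
-/

open MeasureTheory Function NNReal

theorem Function.Surjective.exists_lipschitzWith_comp_eq {X N Y : Type*} [PseudoMetricSpace N]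
    [MetricSpace Y] {q : X → N} (hq : Surjective q) {f : X → Y} {K : ℝ≥0}
    (hf : ∀ x y, dist (f x) (f y) ≤ K * dist (q x) (q y)) :
    ∃ F : N → Y, (∀ x, F (q x) = f x) ∧ LipschitzWith K F := by
  refine ⟨f ∘ surjInv hq, fun x => ?_, LipschitzWith.of_dist_le_mul fun n m => ?_⟩
  · refine dist_le_zero.mp ?_
    simpa [surjInv_eq hq] using hf (surjInv hq (q x)) x
  · simpa [surjInv_eq hq] using hf (surjInv hq n) (surjInv hq m)

theorem MulAction.eq_of_mem_closure_orbit {G X Y : Type*} [Monoid G] [MulAction G X]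
    [TopologicalSpace X] [TopologicalSpace Y] [T2Space Y] {f : X → Y} (hf : Continuous f)
    (hinv : ∀ (g : G) x, f (g • x) = f x) {x y : X} (hy : y ∈ closure (MulAction.orbit G x)) :
    f y = f x := by
  refine closure_minimal ?_ (isClosed_eq hf continuous_const) hy
  rintro _ ⟨g, rfl⟩
  exact hinv g x

theorem LipschitzWith.dist_le_sInf_dist_of_eqOn {X Y : Type*} [PseudoMetricSpace X]
    [PseudoMetricSpace Y] {f : X → Y} (hf : LipschitzWith 1 f) {A B : Set X} {x y : X}
    (hx : x ∈ A) (hy : y ∈ B) (hA : ∀ a ∈ A, f a = f x) (hB : ∀ b ∈ B, f b = f y) :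
    dist (f x) (f y) ≤ sInf ((fun p : X × X => dist p.1 p.2) '' A ×ˢ B) := by
  refine le_csInf ⟨dist x y, (x, y), ⟨hx, hy⟩, rfl⟩ ?_
  rintro _ ⟨⟨a, b⟩, ⟨ha, hb⟩, rfl⟩
  calc dist (f x) (f y) = dist (f a) (f b) := by rw [hA a ha, hB b hb]
    _ ≤ dist a b := by simpa using hf.dist_le_mul a b

section Averaging

variable {G V : Type*} [TopologicalSpace G] [CompactSpace G] [MeasurableSpace G]
  [OpensMeasurableSpace G] {μ : Measure G} [IsProbabilityMeasure μ]
  [NormedAddCommGroup V] [NormedSpace ℝ V]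

theorem lipschitzWith_integral {X : Type*} [PseudoMetricSpace X] {Φ : G → X → V} {K : ℝ≥0}
    (hcont : ∀ x, Continuous fun g => Φ g x) (hlip : ∀ g, LipschitzWith K (Φ g)) :
    LipschitzWith K fun x => ∫ g, Φ g x ∂μ := by
  refine LipschitzWith.of_dist_le_mul fun x y => ?_
  have hint : ∀ x, Integrable (fun g => Φ g x) μ := fun x =>
    (hcont x).integrable_of_hasCompactSupport (.of_compactSpace _)
  rw [dist_eq_norm, ← integral_sub (hint x) (hint y)]
  simpa using norm_integral_le_of_norm_le_const (μ := μ) (.of_forall fun g => by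
    simpa [dist_eq_norm] using (hlip g).dist_le_mul x y)

theorem integral_apply_smul_eq [Group G] [MeasurableMul G] [MeasurableInv G] [μ.IsMulRightInvariant]
    {M : Type*} [TopologicalSpace M] [MulAction G M] [ContinuousSMul G M] {T : G → V → V}
    {δ : M → V} (hδ : Continuous δ) {base : M}
    (hT : ∀ g m, T g (δ m) = δ (g • m) - δ (g • base)) (g : G) (x : M) :
    ∫ h, T h (δ (g • x)) ∂μ = ∫ h, T h (δ x) ∂μ := by
  have hint : ∀ y : M, Integrable (fun h : G => δ (h • y)) μ := fun y =>
    (hδ.comp (continuous_id.smul continuous_const)).integrable_of_hasCompactSupport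
      (.of_compactSpace _)
  have hright : ∫ h, δ (h • g • x) ∂μ = ∫ h, δ (h • x) ∂μ := by
    simpa only [mul_smul] using integral_mul_right_eq_self (μ := μ) (fun h => δ (h • x)) g
  simp only [hT]
  rw [integral_sub (hint _) (hint base), integral_sub (hint x) (hint base), hright]

end Averaging

theorem stmt_16_general {M : Type*} [MetricSpace M] (base : M)
    {G : Type*} [Group G] [TopologicalSpace G] [IsTopologicalGroup G]
    [CompactSpace G] [MeasurableSpace G] [BorelSpace G]
    (μ : Measure G) [IsProbabilityMeasure μ]
    [μ.IsMulRightInvariant]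
    [MulAction G M]
    (hcontM : Continuous fun p : G × M => p.1 • p.2)
    {V : Type*} [NormedAddCommGroup V] [NormedSpace ℝ V]
    (δ : M → V) (hδ : Isometry δ)
    (T : G → V →L[ℝ] V)
    (hT : ∀ (g : G) (m : M), T g (δ m) = δ (g • m) - δ (g • base))
    (hTiso : ∀ g : G, Isometry (T g))
    (hTcont : Continuous fun p : G × V => T p.1 p.2)
    {N : Type*} [MetricSpace N] (q : M → N) (hq : Function.Surjective q)
    (hdist : ∀ x y : M, dist (q x) (q y) = sInf ((fun p : M × M => dist p.1 p.2) ''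
        (closure (MulAction.orbit G x) ×ˢ closure (MulAction.orbit G y)))) :
    let Rm : V → V := fun v => ∫ g, T g v ∂μ
    (∀ (g : G) (x : M), Rm (δ (g • x)) = Rm (δ x)) ∧
    ∃ F : N → V, (∀ x : M, F (q x) = Rm (δ x)) ∧ LipschitzWith 1 F := by
  intro Rm
  have : ContinuousSMul G M := ⟨hcontM⟩
  have hinv : ∀ (g : G) (x : M), Rm (δ (g • x)) = Rm (δ x) :=
    integral_apply_smul_eq hδ.continuous hT
  have hlip : LipschitzWith 1 fun x => Rm (δ x) :=
    lipschitzWith_integral (fun x => hTcont.comp (.prodMk_left (δ x))) fun g =>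
      ((hTiso g).comp hδ).lipschitz
  have hconst : ∀ x, ∀ y ∈ closure (MulAction.orbit G x), Rm (δ y) = Rm (δ x) :=
    fun x _ hy => MulAction.eq_of_mem_closure_orbit hlip.continuous hinv hy
  refine ⟨hinv, hq.exists_lipschitzWith_comp_eq fun x y => ?_⟩
  rw [NNReal.coe_one, one_mul, hdist]
  exact hlip.dist_le_sInf_dist_of_eqOn (subset_closure (MulAction.mem_orbit_self x))
    (subset_closure (MulAction.mem_orbit_self y)) (hconst x) (hconst y)

/-- Let `G` be a compact group with Haar probability `μ` acting continuously by isometries on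
a pointed metric space `M`, let `(V, δ)` realize the Lipschitz-free space `F(M)` (isometric
embedding with `δ base = 0` and dense span), and let `T_g : V → V` be the induced linear
isometries, `T_g(δ m) = δ(g•m) − δ(g•base)`.  Let `R_G(v) = ∫ T_g v dμ(g)` be the averaging
projection.  Then `R_G(δ(gx)) = R_G(δ x)` for all `g, x`, and the induced map
`M/G → F(M)`, `[Gx] ↦ R_G(δ x)` (through the quotient `q : M → N`) is well defined and
`1`-Lipschitz for the quotient metric. -/
theorem stmt_16 {M : Type*} [MetricSpace M] (base : M)
    {G : Type*} [Group G] [TopologicalSpace G] [IsTopologicalGroup G]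
    [CompactSpace G] [MeasurableSpace G] [BorelSpace G]
    (μ : Measure G) [IsProbabilityMeasure μ]
    [μ.IsMulLeftInvariant] [μ.IsMulRightInvariant]
    [MulAction G M]
    (hisoM : ∀ g : G, Isometry (fun x : M => g • x))
    (hcontM : Continuous fun p : G × M => p.1 • p.2)
    {V : Type*} [NormedAddCommGroup V] [NormedSpace ℝ V] [CompleteSpace V]
    (δ : M → V) (hδ : Isometry δ) (hbase : δ base = 0)
    (hdense : Dense (Submodule.span ℝ (Set.range δ) : Set V))
    (T : G → V →L[ℝ] V)
    (hT : ∀ (g : G) (m : M), T g (δ m) = δ (g • m) - δ (g • base))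
    (hTiso : ∀ g : G, Isometry (T g))
    (hTcont : Continuous fun p : G × V => T p.1 p.2)
    {N : Type*} [MetricSpace N] (q : M → N) (hq : Function.Surjective q)
    (hdist : ∀ x y : M, dist (q x) (q y) = sInf ((fun p : M × M => dist p.1 p.2) ''
        (closure (MulAction.orbit G x) ×ˢ closure (MulAction.orbit G y)))) :
    let Rm : V → V := fun v => ∫ g, T g v ∂μ
    (∀ (g : G) (x : M), Rm (δ (g • x)) = Rm (δ x)) ∧
    ∃ F : N → V, (∀ x : M, F (q x) = Rm (δ x)) ∧ LipschitzWith 1 F :=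
  stmt_16_general base μ hcontM δ hδ T hT hTiso hTcont q hq hdist
end

section
/- Let G be a compact group acting continuously by isometries on a proper, purely 1-unrectifiable metric space M. Then the orbit space M/G (orbit closures with the quotient metric) is purely 1-unrectifiable. -/
open scoped NNReal

/-- A metric space is purely 1-unrectifiable if every Lipschitz image (from a subset of `ℝ`)
has vanishing 1-dimensional Hausdorff measure. -/
def PurelyOneUnrectifiable (M : Type*) [MetricSpace M] : Prop :=
  letI : MeasurableSpace M := borel M
  haveI : BorelSpace M := ⟨rfl⟩
  ∀ (A : Set ℝ) (f : ℝ → M) (K : ℝ≥0), LipschitzOnWith K f A →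
    MeasureTheory.Measure.hausdorffMeasure (X := M) 1 (f '' A) = 0

/-!
The quotient map `q : M → M/G` is 1-Lipschitz, its fibres are the orbits, which are compact, and
from any point of `M` some point of any given fibre lies at exactly the quotient distance (move a
pair of orbit points realizing the infimum by an isometry). Hence a `K`-Lipschitz `f : A → M/G`
lifts to a `K`-Lipschitz `F : A → M`: on a finite set by lifting its points in increasing order,
each one next to the lift of its predecessor (distances on `ℝ` add up along monotone chains), and
on all of `A` as an ultrafilter limit of these finite lifts, which exists by compactness of the
fibres. Then `f '' A = q '' (F '' A)` is a Lipschitz image of an `H¹`-null set.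
-/

open Set Filter Topology MulAction Function MeasureTheory

section LipschitzLift

variable {α M N : Type*} [PseudoMetricSpace α] [PseudoMetricSpace M]

theorem LipschitzOnWith.update_insert [DecidableEq α] {K : ℝ≥0} {F : α → M} {S : Set α}
    {a : α} {y : M} (hF : LipschitzOnWith K F S) (ha : a ∉ S)
    (hy : ∀ s ∈ S, dist (F s) y ≤ K * dist s a) :
    LipschitzOnWith K (update F a y) (insert a S) := by
  have hne : ∀ s ∈ S, s ≠ a := fun s hs h => ha (h ▸ hs)
  refine LipschitzOnWith.of_dist_le_mul fun s hs t ht => ?_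
  rcases hs with rfl | hs <;> rcases ht with rfl | ht
  · simp
  · rw [update_self, update_of_ne (hne t ht), dist_comm, dist_comm s]
    exact hy t ht
  · rw [update_self, update_of_ne (hne s hs)]
    exact hy s hs
  · rw [update_of_ne (hne s hs), update_of_ne (hne t ht)]
    exact hF.dist_le_mul s hs t ht

theorem exists_lipschitzOnWith_lift_of_finset [Nonempty M] {q : M → N}
    (hfib : ∀ y, IsCompact (q ⁻¹' {y})) {K : ℝ≥0} {f : α → N} {A : Set α}
    (hfin : ∀ S : Finset α, ↑S ⊆ A → ∃ F : α → M, LipschitzOnWith K F S ∧ EqOn (q ∘ F) f S) :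
    ∃ F : α → M, LipschitzOnWith K F A ∧ EqOn (q ∘ F) f A := by
  classical
  choose Φ hΦ hqΦ using fun S : Finset α =>
    hfin {t ∈ S | t ∈ A} fun _ ht => (Finset.mem_filter.1 ht).2
  let U : Ultrafilter (Finset α) := .of atTop
  have hmem : ∀ t, ∀ᶠ S : Finset α in U, t ∈ S := fun t =>
    Eventually.mono (Ultrafilter.of_le atTop (eventually_ge_atTop {t}))
      fun _ hS => hS (Finset.mem_singleton_self t)
  have hlim : ∀ t ∈ A, ∃ z, q z = f t ∧ Tendsto (Φ · t) U (𝓝 z) := by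
    intro t ht
    have hfiber : ∀ᶠ S in U, Φ S t ∈ q ⁻¹' {f t} :=
      (hmem t).mono fun S hS => hqΦ S (by simp [hS, ht])
    exact (hfib (f t)).ultrafilter_le_nhds (U.map (Φ · t)) (le_principal_iff.2 hfiber)
  choose! F hqF hF using hlim
  refine ⟨F, .of_dist_le_mul fun s hs t ht => ?_, hqF⟩
  refine le_of_tendsto ((hF s hs).dist (hF t ht)) ?_
  filter_upwards [hmem s, hmem t] with S hsS htS
  exact (hΦ S).dist_le_mul s (by simp [hsS, hs]) t (by simp [htS, ht])

theorem Real.dist_add_dist_of_le {s m a : ℝ} (hsm : s ≤ m) (hma : m ≤ a) :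
    dist s m + dist m a = dist s a :=
  dist_add_dist_of_mem_segment <| (segment_eq_Icc (hsm.trans hma)).symm ▸ ⟨hsm, hma⟩

theorem exists_lipschitzOnWith_lift_finset_real [PseudoMetricSpace N] {q : M → N}
    (hq : Surjective q) (hlift : ∀ x y, ∃ x', q x' = y ∧ dist x x' ≤ dist (q x) y)
    {K : ℝ≥0} {f : ℝ → N} (S : Finset ℝ) (hf : LipschitzOnWith K f S) :
    ∃ F : ℝ → M, LipschitzOnWith K F S ∧ EqOn (q ∘ F) f S := by
  induction S using Finset.induction_on_max with
  | empty => exact ⟨fun _ => (hq (f 0)).choose, by simp, by simp⟩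
  | insert a S hlt ih =>
    rw [Finset.coe_insert] at hf ⊢
    obtain ⟨F, hF, hqF⟩ := ih (hf.mono (subset_insert a _))
    suffices ∃ y, q y = f a ∧ ∀ s ∈ S, dist (F s) y ≤ K * dist s a by
      obtain ⟨y, hqy, hy⟩ := this
      refine ⟨update F a y, hF.update_insert (fun ha => (hlt a ha).false) hy, ?_⟩
      rintro t (rfl | ht)
      · simpa using hqy
      · simpa [update_of_ne (hlt t ht).ne] using hqF ht
    rcases S.eq_empty_or_nonempty with rfl | hne
    · obtain ⟨y, hy⟩ := hq (f a)
      exact ⟨y, hy, by simp⟩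
    set m := S.max' hne
    have hm : m ∈ S := S.max'_mem hne
    obtain ⟨y, hqy, hy⟩ := hlift (F m) (f a)
    have hmy : dist (F m) y ≤ K * dist m a := by
      rw [← comp_apply (f := q), hqF hm] at hy
      exact hy.trans (hf.dist_le_mul m (by simp [hm]) a (mem_insert a _))
    refine ⟨y, hqy, fun s hs => ?_⟩
    calc dist (F s) y ≤ dist (F s) (F m) + dist (F m) y := dist_triangle _ _ _
      _ ≤ K * dist s m + K * dist m a := add_le_add (hF.dist_le_mul s hs m hm) hmy
      _ = K * dist s a := by
        rw [← mul_add, Real.dist_add_dist_of_le (S.le_max' s hs) (hlt m hm).le]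

end LipschitzLift

theorem PurelyOneUnrectifiable.of_lipschitzWith_of_lift {M N : Type*} [MetricSpace M]
    [MetricSpace N] (hM : PurelyOneUnrectifiable M) {q : M → N} {C : ℝ≥0}
    (hq : LipschitzWith C q) (hsurj : Surjective q)
    (hlift : ∀ x y, ∃ x', q x' = y ∧ dist x x' ≤ dist (q x) y)
    (hfib : ∀ y, IsCompact (q ⁻¹' {y})) : PurelyOneUnrectifiable N := by
  intro A f K hf
  have : Nonempty M := ⟨(hsurj (f 0)).choose⟩
  obtain ⟨F, hF, hqF⟩ := exists_lipschitzOnWith_lift_of_finset hfib fun S hS =>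
    exists_lipschitzOnWith_lift_finset_real hsurj hlift S (hf.mono hS)
  let : MeasurableSpace M := borel M
  have : BorelSpace M := ⟨rfl⟩
  let : MeasurableSpace N := borel N
  have : BorelSpace N := ⟨rfl⟩
  rw [← image_congr hqF, image_comp, ← nonpos_iff_eq_zero]
  calc μH[1] (q '' (F '' A)) ≤ (C : ENNReal) ^ (1 : ℝ) * μH[1] (F '' A) :=
        hq.hausdorffMeasure_image_le zero_le_one _
    _ = 0 := by rw [hM A F K hF, mul_zero]

theorem MulAction.isCompact_orbit {G M : Type*} [Group G] [TopologicalSpace G] [CompactSpace G]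
    [TopologicalSpace M] [MulAction G M] [ContinuousSMul G M] (x : M) : IsCompact (orbit G x) :=
  isCompact_range (continuous_id.smul continuous_const)

section OrbitSpace

variable {G M N : Type*} [Group G] [MetricSpace M] [MulAction G M] [MetricSpace N]

theorem dist_le_of_mem_orbit {q : M → N}
    (hdist : ∀ x y : M, dist (q x) (q y) = sInf ((fun p : M × M => dist p.1 p.2) ''
      (closure (orbit G x) ×ˢ closure (orbit G y))))
    {x y x' y' : M} (hx : x' ∈ orbit G x) (hy : y' ∈ orbit G y) :
    dist (q x) (q y) ≤ dist x' y' :=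
  hdist x y ▸ csInf_le ⟨0, by rintro _ ⟨p, -, rfl⟩; exact dist_nonneg⟩
    ⟨(x', y'), ⟨subset_closure hx, subset_closure hy⟩, rfl⟩

variable [TopologicalSpace G] [CompactSpace G] [ContinuousSMul G M] [IsIsometricSMul G M]

theorem exists_smul_dist_eq {q : M → N}
    (hdist : ∀ x y : M, dist (q x) (q y) = sInf ((fun p : M × M => dist p.1 p.2) ''
      (closure (orbit G x) ×ˢ closure (orbit G y))))
    (x y : M) : ∃ g : G, dist x (g • y) = dist (q x) (q y) := by
  have hK := (isCompact_orbit (G := G) x).prod (isCompact_orbit (G := G) y)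
  rw [hdist, (isCompact_orbit x).isClosed.closure_eq, (isCompact_orbit y).isClosed.closure_eq]
  obtain ⟨⟨_, _⟩, ⟨⟨g, rfl⟩, ⟨h, rfl⟩⟩, hp⟩ := (hK.image continuous_dist).sInf_mem
    (Nonempty.image _ ⟨(x, y), mem_orbit_self x, mem_orbit_self y⟩)
  refine ⟨g⁻¹ * h, ?_⟩
  rw [← hp, ← dist_smul g, mul_smul, smul_inv_smul]

theorem preimage_singleton_eq_orbit {q : M → N}
    (hdist : ∀ x y : M, dist (q x) (q y) = sInf ((fun p : M × M => dist p.1 p.2) ''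
      (closure (orbit G x) ×ˢ closure (orbit G y))))
    (x : M) : q ⁻¹' {q x} = orbit G x := by
  ext y
  constructor
  · intro (hy : q y = q x)
    obtain ⟨g, hg⟩ := exists_smul_dist_eq hdist y x
    rw [hy, dist_self, dist_eq_zero] at hg
    exact ⟨g, hg.symm⟩
  · rintro ⟨g, rfl⟩
    exact dist_le_zero.1 <| by
      simpa using dist_le_of_mem_orbit hdist (mem_orbit_self (g • x)) (mem_orbit x g)

end OrbitSpace

theorem stmt_19_general {M : Type*} [MetricSpace M]
    {G : Type*} [Group G] [TopologicalSpace G] [CompactSpace G]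
    [MulAction G M]
    (hisoM : ∀ g : G, Isometry (fun x : M => g • x))
    (hcontM : Continuous fun p : G × M => p.1 • p.2)
    (hM : PurelyOneUnrectifiable M)
    {N : Type*} [MetricSpace N] (q : M → N) (hq : Function.Surjective q)
    (hdist : ∀ x y : M, dist (q x) (q y) = sInf ((fun p : M × M => dist p.1 p.2) ''
        (closure (MulAction.orbit G x) ×ˢ closure (MulAction.orbit G y)))) :
    PurelyOneUnrectifiable N := by
  have : ContinuousSMul G M := ⟨hcontM⟩
  have : IsIsometricSMul G M := ⟨hisoM⟩
  have hq1 : LipschitzWith 1 q := .of_dist_le_mul fun x y => by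
    simpa using dist_le_of_mem_orbit hdist (mem_orbit_self x) (mem_orbit_self y)
  have hfib := preimage_singleton_eq_orbit hdist
  refine hM.of_lipschitzWith_of_lift hq1 hq (fun x y => ?_) fun y => ?_
  · obtain ⟨y, rfl⟩ := hq y
    obtain ⟨g, hg⟩ := exists_smul_dist_eq hdist x y
    exact ⟨g • y, by simpa [← hfib y] using mem_orbit y g, hg.le⟩
  · obtain ⟨x, rfl⟩ := hq y
    exact hfib x ▸ isCompact_orbit x

/-- Let `G` be a compact group acting continuously by isometries on a proper, purely
1-unrectifiable metric space `M`.  Then the orbit space `M/G` (orbit closures with the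
quotient metric, realized by a surjection `q : M → N` satisfying the quotient-distance
formula) is purely 1-unrectifiable. -/
theorem stmt_19 {M : Type*} [MetricSpace M] [ProperSpace M]
    {G : Type*} [Group G] [TopologicalSpace G] [IsTopologicalGroup G] [CompactSpace G]
    [MulAction G M]
    (hisoM : ∀ g : G, Isometry (fun x : M => g • x))
    (hcontM : Continuous fun p : G × M => p.1 • p.2)
    (hM : PurelyOneUnrectifiable M)
    {N : Type*} [MetricSpace N] (q : M → N) (hq : Function.Surjective q)
    (hdist : ∀ x y : M, dist (q x) (q y) = sInf ((fun p : M × M => dist p.1 p.2) ''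
        (closure (MulAction.orbit G x) ×ˢ closure (MulAction.orbit G y)))) :
    PurelyOneUnrectifiable N :=
  stmt_19_general hisoM hcontM hM q hq hdist
end
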